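/- arXiv:1910.12646 — 10 statements merged into one kernel-verified Lean document; each statement's English description precedes it below -/
import Mathlib

section
/- Let α be a real number with α < 0. Then the cubic polynomial p(u) = u³ − u² − (α+1)u + 1 has exactly one real root, and this root lies in the open interval (−∞, 0). -/
/-!
Writing `p(u) = (u - 1)²(u + 1) - αu` shows that `p` is positive on `[0, ∞)` when `α < 0`, and
`p(-1) = α < 0 < 1 = p(0)` gives a root in `(-1, 0)`. For two roots `u, v` the combination
`u p(v) - v p(u) = (v - u)(uv(u + v - 1) - 1)` no longer involves `α`, and its second factor is
negative when `u, v < 0`, so there is only one negative root.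
-/

open Set

def vortexCubic (α u : ℝ) : ℝ := u ^ 3 - u ^ 2 - (α + 1) * u + 1

lemma vortexCubic_eq (α u : ℝ) : vortexCubic α u = (u - 1) ^ 2 * (u + 1) - α * u := by
  unfold vortexCubic; ring

lemma vortexCubic_pos_of_nonneg {α u : ℝ} (hα : α < 0) (hu : 0 ≤ u) : 0 < vortexCubic α u := by
  rw [vortexCubic_eq]
  rcases hu.eq_or_lt with rfl | hu
  · norm_num
  · have : 0 ≤ (u - 1) ^ 2 * (u + 1) := by positivity
    nlinarith [mul_neg_of_neg_of_pos hα hu]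

lemma neg_of_vortexCubic_eq_zero {α u : ℝ} (hα : α < 0) (hu : vortexCubic α u = 0) : u < 0 := by
  by_contra! h
  exact (vortexCubic_pos_of_nonneg hα h).ne' hu

lemma continuous_vortexCubic (α : ℝ) : Continuous (vortexCubic α) := by
  unfold vortexCubic; fun_prop

lemma exists_vortexCubic_eq_zero_mem_Ioo {α : ℝ} (hα : α < 0) :
    ∃ u ∈ Ioo (-1 : ℝ) 0, vortexCubic α u = 0 := by
  have hsign : (0 : ℝ) ∈ Ioo (vortexCubic α (-1)) (vortexCubic α 0) :=
    ⟨by norm_num [vortexCubic]; linarith, by norm_num [vortexCubic]⟩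
  exact intermediate_value_Ioo (by norm_num) (continuous_vortexCubic α).continuousOn hsign

lemma eq_of_vortexCubic_eq_zero_of_neg {α u v : ℝ} (hu : vortexCubic α u = 0)
    (hv : vortexCubic α v = 0) (hu0 : u < 0) (hv0 : v < 0) : u = v := by
  have hfactor : (v - u) * (u * v * (u + v - 1) - 1) = 0 := by
    unfold vortexCubic at hu hv
    linear_combination u * hv - v * hu
  have hneg : u * v * (u + v - 1) - 1 < 0 := by
    nlinarith [mul_pos_of_neg_of_neg hu0 hv0]
  rcases mul_eq_zero.mp hfactor with h | h
  · linarith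
  · exact absurd h hneg.ne

/-- For `α < 0`, the cubic `p(u) = u³ − u² − (α+1)u + 1` has exactly one real root,
and this root lies in `(−∞, 0)`. -/
theorem stmt_0 (α : ℝ) (hα : α < 0) :
    (∃! u : ℝ, u ^ 3 - u ^ 2 - (α + 1) * u + 1 = 0) ∧
    (∀ u : ℝ, u ^ 3 - u ^ 2 - (α + 1) * u + 1 = 0 → u < 0) := by
  have hneg : ∀ u, vortexCubic α u = 0 → u < 0 := fun u => neg_of_vortexCubic_eq_zero hα
  obtain ⟨u, -, hu⟩ := exists_vortexCubic_eq_zero_mem_Ioo hα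
  exact ⟨⟨u, hu, fun v hv => eq_of_vortexCubic_eq_zero_of_neg hv hu (hneg v hv) (hneg u hu)⟩, hneg⟩
end

section
/- Let α be a real number with α > 0. Then the cubic polynomial p(u) = u³ − u² − (α+1)u + 1 has exactly three distinct real roots, and exactly one of them lies in each of the intervals (−∞, 0), (0, 1), and (1, ∞). -/
/-!
The cubic is `1` at `0`, `-α` at `1`, and has the signs of `u³` at `±(α + 2)`, so the
intermediate value theorem gives a root in each of the three intervals. A monic cubic over a
domain has no further root: subtracting the equations of two distinct roots `a, a'` and
cancelling `a - a'` leaves a symmetric quadratic relation, and comparing two such relations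
shows that three distinct roots always sum to minus the `u²`-coefficient, which pins down a
fourth root.
-/

section MonicCubic

variable {R : Type*} [CommRing R] [IsDomain R] {b c d : R}

theorem monic_cubic_divided_difference_eq_zero {a a' : R} (hne : a ≠ a')
    (ha : a ^ 3 + b * a ^ 2 + c * a + d = 0) (ha' : a' ^ 3 + b * a' ^ 2 + c * a' + d = 0) :
    a ^ 2 + a * a' + a' ^ 2 + b * (a + a') + c = 0 := by
  have h : (a - a') * (a ^ 2 + a * a' + a' ^ 2 + b * (a + a') + c) = 0 := by
    linear_combination ha - ha'
  exact (mul_eq_zero.1 h).resolve_left (sub_ne_zero.2 hne)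

theorem monic_cubic_sum_of_distinct_roots {u₁ u₂ u₃ : R}
    (h₁₂ : u₁ ≠ u₂) (h₁₃ : u₁ ≠ u₃) (h₂₃ : u₂ ≠ u₃)
    (hu₁ : u₁ ^ 3 + b * u₁ ^ 2 + c * u₁ + d = 0) (hu₂ : u₂ ^ 3 + b * u₂ ^ 2 + c * u₂ + d = 0)
    (hu₃ : u₃ ^ 3 + b * u₃ ^ 2 + c * u₃ + d = 0) :
    u₁ + u₂ + u₃ = -b := by
  have h : (u₂ - u₃) * (u₁ + u₂ + u₃ + b) = 0 := by
    linear_combination monic_cubic_divided_difference_eq_zero h₁₂ hu₁ hu₂ -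
      monic_cubic_divided_difference_eq_zero h₁₃ hu₁ hu₃
  exact eq_neg_of_add_eq_zero_left ((mul_eq_zero.1 h).resolve_left (sub_ne_zero.2 h₂₃))

theorem monic_cubic_root_eq_of_distinct_roots {u₁ u₂ u₃ x : R}
    (h₁₂ : u₁ ≠ u₂) (h₁₃ : u₁ ≠ u₃) (h₂₃ : u₂ ≠ u₃)
    (hu₁ : u₁ ^ 3 + b * u₁ ^ 2 + c * u₁ + d = 0) (hu₂ : u₂ ^ 3 + b * u₂ ^ 2 + c * u₂ + d = 0)
    (hu₃ : u₃ ^ 3 + b * u₃ ^ 2 + c * u₃ + d = 0) (hx : x ^ 3 + b * x ^ 2 + c * x + d = 0) :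
    x = u₁ ∨ x = u₂ ∨ x = u₃ := by
  by_cases hx₁ : x = u₁
  · exact Or.inl hx₁
  by_cases hx₂ : x = u₂
  · exact Or.inr (Or.inl hx₂)
  have hsum := monic_cubic_sum_of_distinct_roots h₁₂ h₁₃ h₂₃ hu₁ hu₂ hu₃
  have hsum' := monic_cubic_sum_of_distinct_roots h₁₂ (Ne.symm hx₁) (Ne.symm hx₂) hu₁ hu₂ hx
  exact Or.inr (Or.inr (by linear_combination hsum' - hsum))

end MonicCubic

/-- For `α > 0`, the cubic `p(u) = u³ − u² − (α+1)u + 1` has exactly three distinct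
real roots, one in each of the intervals `(−∞,0)`, `(0,1)` and `(1,∞)`. -/
theorem stmt_1 (α : ℝ) (hα : 0 < α) :
    ∃ u₁ u₂ u₃ : ℝ,
      u₁ < 0 ∧ 0 < u₂ ∧ u₂ < 1 ∧ 1 < u₃ ∧
      u₁ ^ 3 - u₁ ^ 2 - (α + 1) * u₁ + 1 = 0 ∧
      u₂ ^ 3 - u₂ ^ 2 - (α + 1) * u₂ + 1 = 0 ∧
      u₃ ^ 3 - u₃ ^ 2 - (α + 1) * u₃ + 1 = 0 ∧
      (∀ u : ℝ, u ^ 3 - u ^ 2 - (α + 1) * u + 1 = 0 → u = u₁ ∨ u = u₂ ∨ u = u₃) := by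
  set p : ℝ → ℝ := fun u => u ^ 3 - u ^ 2 - (α + 1) * u + 1 with hp_def
  have hp : Continuous p := by fun_prop
  have hp_neg : p (-(α + 2)) < 0 := by simp only [hp_def]; nlinarith
  have hp_zero : p 0 = 1 := by norm_num [hp_def]
  have hp_one : p 1 = -α := by simp only [hp_def]; ring
  have hp_pos : 0 < p (α + 2) := by simp only [hp_def]; nlinarith
  obtain ⟨u₁, ⟨-, hu₁⟩, hp₁⟩ := intermediate_value_Ioo (by linarith) hp.continuousOn
    (show (0 : ℝ) ∈ Set.Ioo (p (-(α + 2))) (p 0) by constructor <;> linarith)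
  obtain ⟨u₂, ⟨hu₂, hu₂'⟩, hp₂⟩ := intermediate_value_Ioo' zero_le_one hp.continuousOn
    (show (0 : ℝ) ∈ Set.Ioo (p 1) (p 0) by constructor <;> linarith)
  obtain ⟨u₃, ⟨hu₃, -⟩, hp₃⟩ := intermediate_value_Ioo (by linarith) hp.continuousOn
    (show (0 : ℝ) ∈ Set.Ioo (p 1) (p (α + 2)) by constructor <;> linarith)
  have hmonic (u : ℝ) (hu : p u = 0) : u ^ 3 + (-1) * u ^ 2 + (-(α + 1)) * u + 1 = 0 := by
    linear_combination hu
  refine ⟨u₁, u₂, u₃, hu₁, hu₂, hu₂', hu₃, hp₁, hp₂, hp₃, fun u hu => ?_⟩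
  exact monic_cubic_root_eq_of_distinct_roots (by linarith) (by linarith) (by linarith)
    (hmonic u₁ hp₁) (hmonic u₂ hp₂) (hmonic u₃ hp₃) (hmonic u hu)
end

section
/- Let Γ0, Γ1 be real numbers with Γ0 ≠ 0, and let (u,v): ℝ → ℝ² be a global solution of the system (u',v') = F(u,v) avoiding the points (0,0) and (1,0). Then for every t ∈ ℝ, the derivative of the function t ↦ u(t)² + v(t)² equals −Γ1·v(t) / (π·((u(t)−1)² + v(t)²)). -/
/-!
Differentiating gives `d/dt (u² + v²) = 2 (u u' + v v')`. The rigid rotation with angular velocity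
`ω` and the flow of the vortex at the origin both move `(u, v)` perpendicularly to `(u, v)`, so
only the vortex at `(1, 0)` changes the distance to the origin.
-/

theorem hasDerivAt_sq_add_sq_of_rotation_add {u v : ℝ → ℝ} {f a b t : ℝ}
    (hu : HasDerivAt u (-(f * v t) + a) t) (hv : HasDerivAt v (f * u t + b) t) :
    HasDerivAt (fun s ↦ u s ^ 2 + v s ^ 2) (2 * (u t * a + v t * b)) t :=
  ((hu.pow 2).add (hv.pow 2)).congr_deriv (by ring)

theorem stmt_5_general (Γ₀ Γ₁ : ℝ) (u v : ℝ → ℝ)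
    (hu : ∀ t : ℝ, HasDerivAt u
      ((Γ₀ / (2 * Real.pi)) * v t
        - (Γ₁ / (2 * Real.pi)) * (v t / ((u t - 1) ^ 2 + v t ^ 2))
        - (Γ₀ / (2 * Real.pi)) * (v t / (u t ^ 2 + v t ^ 2))) t)
    (hv : ∀ t : ℝ, HasDerivAt v
      (-((Γ₀ / (2 * Real.pi)) * u t)
        + (Γ₁ / (2 * Real.pi)) * ((u t - 1) / ((u t - 1) ^ 2 + v t ^ 2))
        + (Γ₀ / (2 * Real.pi)) * (u t / (u t ^ 2 + v t ^ 2))) t) :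
    ∀ t : ℝ, HasDerivAt (fun s : ℝ => u s ^ 2 + v s ^ 2)
      (-Γ₁ * v t / (Real.pi * ((u t - 1) ^ 2 + v t ^ 2))) t := by
  intro t
  have hrot := hasDerivAt_sq_add_sq_of_rotation_add
    (f := Γ₀ / (2 * Real.pi) * ((u t ^ 2 + v t ^ 2)⁻¹ - 1))
    (a := -(Γ₁ / (2 * Real.pi)) * (v t / ((u t - 1) ^ 2 + v t ^ 2)))
    (b := Γ₁ / (2 * Real.pi) * ((u t - 1) / ((u t - 1) ^ 2 + v t ^ 2)))
    ((hu t).congr_deriv (by ring)) ((hv t).congr_deriv (by ring))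
  exact hrot.congr_deriv (by simp only [div_eq_mul_inv, mul_inv]; ring)

/-- Along any global solution, the derivative of `t ↦ u(t)² + v(t)²` equals
`−Γ1·v(t) / (π·((u(t)−1)² + v(t)²))`. -/
theorem stmt_5 (Γ₀ Γ₁ : ℝ) (hΓ₀ : Γ₀ ≠ 0) (u v : ℝ → ℝ)
    (havoid : ∀ t : ℝ, (u t, v t) ≠ ((0 : ℝ), (0 : ℝ)) ∧ (u t, v t) ≠ ((1 : ℝ), (0 : ℝ)))
    (hu : ∀ t : ℝ, HasDerivAt u
      ((Γ₀ / (2 * Real.pi)) * v t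
        - (Γ₁ / (2 * Real.pi)) * (v t / ((u t - 1) ^ 2 + v t ^ 2))
        - (Γ₀ / (2 * Real.pi)) * (v t / (u t ^ 2 + v t ^ 2))) t)
    (hv : ∀ t : ℝ, HasDerivAt v
      (-((Γ₀ / (2 * Real.pi)) * u t)
        + (Γ₁ / (2 * Real.pi)) * ((u t - 1) / ((u t - 1) ^ 2 + v t ^ 2))
        + (Γ₀ / (2 * Real.pi)) * (u t / (u t ^ 2 + v t ^ 2))) t) :
    ∀ t : ℝ, HasDerivAt (fun s : ℝ => u s ^ 2 + v s ^ 2)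
      (-Γ₁ * v t / (Real.pi * ((u t - 1) ^ 2 + v t ^ 2))) t :=
  stmt_5_general Γ₀ Γ₁ u v hu hv
end

section
/- Let Γ0, Γ1 be real numbers with Γ0 ≠ 0, and let (u,v): ℝ → ℝ² be a global solution of the system (u',v') = F(u,v) avoiding the points (0,0) and (1,0). Then for every t ∈ ℝ, the derivative of the function t ↦ (u(t)−1)² + v(t)² equals −Γ0·v(t)·(u(t)² + v(t)² − 1) / (π·(u(t)² + v(t)²)). -/
/-!
Differentiating `r₁₂² = (u - 1)² + v²` along the flow gives `2 (u - 1) u' + 2 v v'`. The velocity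
induced by the vortex at `(1, 0)` is perpendicular to the radius vector `(u - 1, v)`, so `Γ₁`
drops out, and what remains of the rotation `ω` and of the vortex at the origin simplifies to
`Γ₀ v (1 / (u² + v²) - 1) / π`.
-/

theorem sq_sub_add_sq_sub_ne_zero {R : Type*} [CommRing R] [LinearOrder R]
    [IsStrictOrderedRing R] {x y a b : R} (h : (x, y) ≠ (a, b)) :
    (x - a) ^ 2 + (y - b) ^ 2 ≠ 0 := by
  contrapose! h
  obtain ⟨hx, hy⟩ := (add_eq_zero_iff_of_nonneg (sq_nonneg _) (sq_nonneg _)).mp h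
  rw [sq_eq_zero_iff, sub_eq_zero] at hx hy
  rw [hx, hy]

theorem stmt_6_general (Γ₀ Γ₁ : ℝ) (u v : ℝ → ℝ)
    (havoid : ∀ t : ℝ, (u t, v t) ≠ ((0 : ℝ), (0 : ℝ)) ∧ (u t, v t) ≠ ((1 : ℝ), (0 : ℝ)))
    (hu : ∀ t : ℝ, HasDerivAt u
      ((Γ₀ / (2 * Real.pi)) * v t
        - (Γ₁ / (2 * Real.pi)) * (v t / ((u t - 1) ^ 2 + v t ^ 2))
        - (Γ₀ / (2 * Real.pi)) * (v t / (u t ^ 2 + v t ^ 2))) t)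
    (hv : ∀ t : ℝ, HasDerivAt v
      (-((Γ₀ / (2 * Real.pi)) * u t)
        + (Γ₁ / (2 * Real.pi)) * ((u t - 1) / ((u t - 1) ^ 2 + v t ^ 2))
        + (Γ₀ / (2 * Real.pi)) * (u t / (u t ^ 2 + v t ^ 2))) t) :
    ∀ t : ℝ, HasDerivAt (fun s : ℝ => (u s - 1) ^ 2 + v s ^ 2)
      (-Γ₀ * v t * (u t ^ 2 + v t ^ 2 - 1) / (Real.pi * (u t ^ 2 + v t ^ 2))) t := by
  intro t
  have hB : u t ^ 2 + v t ^ 2 ≠ 0 := by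
    simpa using sq_sub_add_sq_sub_ne_zero (havoid t).1
  have hA : (u t - 1) ^ 2 + v t ^ 2 ≠ 0 := by
    simpa using sq_sub_add_sq_sub_ne_zero (havoid t).2
  refine ((((hu t).sub_const 1).pow 2).add ((hv t).pow 2)).congr_deriv ?_
  field_simp
  ring

/-- Along any global solution, the derivative of `t ↦ (u(t)−1)² + v(t)²` equals
`−Γ0·v(t)·(u(t)² + v(t)² − 1) / (π·(u(t)² + v(t)²))`. -/
theorem stmt_6 (Γ₀ Γ₁ : ℝ) (hΓ₀ : Γ₀ ≠ 0) (u v : ℝ → ℝ)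
    (havoid : ∀ t : ℝ, (u t, v t) ≠ ((0 : ℝ), (0 : ℝ)) ∧ (u t, v t) ≠ ((1 : ℝ), (0 : ℝ)))
    (hu : ∀ t : ℝ, HasDerivAt u
      ((Γ₀ / (2 * Real.pi)) * v t
        - (Γ₁ / (2 * Real.pi)) * (v t / ((u t - 1) ^ 2 + v t ^ 2))
        - (Γ₀ / (2 * Real.pi)) * (v t / (u t ^ 2 + v t ^ 2))) t)
    (hv : ∀ t : ℝ, HasDerivAt v
      (-((Γ₀ / (2 * Real.pi)) * u t)
        + (Γ₁ / (2 * Real.pi)) * ((u t - 1) / ((u t - 1) ^ 2 + v t ^ 2))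
        + (Γ₀ / (2 * Real.pi)) * (u t / (u t ^ 2 + v t ^ 2))) t) :
    ∀ t : ℝ, HasDerivAt (fun s : ℝ => (u s - 1) ^ 2 + v s ^ 2)
      (-Γ₀ * v t * (u t ^ 2 + v t ^ 2 - 1) / (Real.pi * (u t ^ 2 + v t ^ 2))) t :=
  stmt_6_general Γ₀ Γ₁ u v havoid hu hv
end

section
/- Let Γ0, Γ1 be real numbers with Γ0 ≠ 0, set ω = Γ0/(2π), and let c ∈ ℝ. Then the level set { (u,v) ∈ ℝ² \ {(0,0),(1,0)} : H(u,v) = c } of the Hamiltonian H(u,v) = −(ω/2)(u²+v²) + (Γ1/(4π))·log((u−1)²+v²) + (Γ0/(4π))·log(u²+v²) is a bounded subset of ℝ². -/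
/-!
Multiplying the level-set equation by `4π/Γ₀` and writing `r = u² + v²`, `s = (u - 1)² + v²`,
it reads `log r - r + (Γ₁/Γ₀) log s = 4πc/Γ₀`. Far from the origin `s ≤ 4r`, so both logarithms
are `o(r)` and the left side is asymptotic to `-r`; it therefore tends to `-∞` along the
cobounded filter and stays away from any fixed value outside a bounded set.
-/

open Filter Bornology Asymptotics Real

lemma Bornology.isBounded_setOf_le_of_tendsto_atBot {α : Type*} [Bornology α] {f : α → ℝ}
    (hf : Tendsto f (cobounded α) atBot) (c : ℝ) : IsBounded {x | c ≤ f x} := by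
  rw [isBounded_def]
  filter_upwards [hf.eventually_lt_atBot c] with x hx using not_le.mpr hx

lemma tendsto_sq_dist_cobounded_atTop (a b : ℝ) :
    Tendsto (fun p : ℝ × ℝ => (p.1 - a) ^ 2 + (p.2 - b) ^ 2) (cobounded (ℝ × ℝ)) atTop := by
  refine tendsto_atTop_mono (fun p => ?_)
    ((tendsto_pow_atTop two_ne_zero).comp (Metric.tendsto_dist_right_cobounded_atTop (a, b)))
  rw [Function.comp_apply, Prod.dist_eq, Real.dist_eq, Real.dist_eq]
  rcases max_cases |p.1 - a| |p.2 - b| with ⟨h, -⟩ | ⟨h, -⟩ <;>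
    rw [h, sq_abs] <;> nlinarith [sq_nonneg (p.1 - a), sq_nonneg (p.2 - b)]

lemma tendsto_log_sub_add_mul_log_cobounded_atBot (κ : ℝ) :
    Tendsto (fun p : ℝ × ℝ => log (p.1 ^ 2 + p.2 ^ 2) - (p.1 ^ 2 + p.2 ^ 2)
      + κ * log ((p.1 - 1) ^ 2 + p.2 ^ 2)) (cobounded (ℝ × ℝ)) atBot := by
  set r : ℝ × ℝ → ℝ := fun p => p.1 ^ 2 + p.2 ^ 2
  set s : ℝ × ℝ → ℝ := fun p => (p.1 - 1) ^ 2 + p.2 ^ 2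
  have hr : Tendsto r (cobounded _) atTop := by
    simpa [r] using tendsto_sq_dist_cobounded_atTop 0 0
  have hs : Tendsto s (cobounded _) atTop := by
    simpa [s] using tendsto_sq_dist_cobounded_atTop 1 0
  have hsr : s =O[cobounded _] r := by
    refine IsBigO.of_bound 4 ?_
    filter_upwards [hr.eventually_ge_atTop 1] with p hp
    rw [Real.norm_of_nonneg (by positivity), Real.norm_of_nonneg (by positivity)]
    nlinarith [sq_nonneg (p.1 + 1), show 1 ≤ p.1 ^ 2 + p.2 ^ 2 from hp]
  have hlog_r : (fun p => log (r p)) =o[cobounded _] r :=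
    isLittleO_log_id_atTop.comp_tendsto hr
  have hlog_s : (fun p => log (s p)) =o[cobounded _] r :=
    (isLittleO_log_id_atTop.comp_tendsto hs).trans_isBigO hsr
  have hequiv : (fun p => -r p + (log (r p) + κ * log (s p))) ~[cobounded _] fun p => -r p :=
    (IsEquivalent.refl).add_isLittleO ((hlog_r.add (hlog_s.const_mul_left κ)).neg_right)
  refine hequiv.symm.tendsto_atBot (tendsto_neg_atTop_atBot.comp hr) |>.congr fun p => ?_
  ring

/-- Every level set of the Hamiltonian
`H(u,v) = −(ω/2)(u²+v²) + (Γ1/(4π))log((u−1)²+v²) + (Γ0/(4π))log(u²+v²)`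
(with `ω = Γ0/(2π)`, on `ℝ² \ {(0,0),(1,0)}`) is a bounded subset of `ℝ²`. -/
theorem stmt_7 (Γ₀ Γ₁ : ℝ) (hΓ₀ : Γ₀ ≠ 0) (c : ℝ) :
    Bornology.IsBounded {p : ℝ × ℝ |
      p ≠ ((0 : ℝ), (0 : ℝ)) ∧ p ≠ ((1 : ℝ), (0 : ℝ)) ∧
      -(Γ₀ / (2 * Real.pi) / 2) * (p.1 ^ 2 + p.2 ^ 2)
        + (Γ₁ / (4 * Real.pi)) * Real.log ((p.1 - 1) ^ 2 + p.2 ^ 2)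
        + (Γ₀ / (4 * Real.pi)) * Real.log (p.1 ^ 2 + p.2 ^ 2) = c} := by
  refine (isBounded_setOf_le_of_tendsto_atBot
    (tendsto_log_sub_add_mul_log_cobounded_atBot (Γ₁ / Γ₀)) (4 * π * c / Γ₀)).subset ?_
  rintro p ⟨-, -, hp⟩
  rw [Set.mem_ofPred_eq, ← hp]
  apply le_of_eq
  field_simp
  ring
end

section
/- Let Γ0, Γ1 be real numbers with Γ0 ≠ 0 and Γ1 ≠ 0, and let (u,v): ℝ → ℝ² be a global solution of the system (u',v') = F(u,v) avoiding the points (0,0) and (1,0). Then the two functions t ↦ u(t)² + v(t)² and t ↦ (u(t)−1)² + v(t)² are both constant on ℝ if and only if the curve (u,v) is a constant function (that is, an equilibrium solution of the system). -/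
/-!
The fixed vortex and the rotating frame contribute a velocity tangent to the circles centred at
the origin, so along a solution `d/dt (u² + v²) = -(Γ₁ / π) · v / ((u - 1)² + v²)`. If `u² + v²`
is constant and `Γ₁ ≠ 0`, then `v ≡ 0`, which makes `u' ≡ 0`; hence the solution is an
equilibrium. The converse is immediate.
-/

open Real

noncomputable section

def vortexFieldU (Γ₀ Γ₁ u v : ℝ) : ℝ :=
  Γ₀ / (2 * π) * v - Γ₁ / (2 * π) * (v / ((u - 1) ^ 2 + v ^ 2))
    - Γ₀ / (2 * π) * (v / (u ^ 2 + v ^ 2))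

def vortexFieldV (Γ₀ Γ₁ u v : ℝ) : ℝ :=
  -(Γ₀ / (2 * π) * u) + Γ₁ / (2 * π) * ((u - 1) / ((u - 1) ^ 2 + v ^ 2))
    + Γ₀ / (2 * π) * (u / (u ^ 2 + v ^ 2))

end

theorem vortexFieldU_zero_right (Γ₀ Γ₁ u : ℝ) : vortexFieldU Γ₀ Γ₁ u 0 = 0 := by
  simp [vortexFieldU]

theorem mul_vortexFieldU_add_mul_vortexFieldV (Γ₀ Γ₁ u v : ℝ) :
    u * vortexFieldU Γ₀ Γ₁ u v + v * vortexFieldV Γ₀ Γ₁ u v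
      = -(Γ₁ / (2 * π) * (v / ((u - 1) ^ 2 + v ^ 2))) := by
  unfold vortexFieldU vortexFieldV
  ring

theorem eq_zero_of_div_sq_add_sq_eq_zero {a v : ℝ} (h : v / (a ^ 2 + v ^ 2) = 0) : v = 0 := by
  rcases div_eq_zero_iff.mp h with hv | hden
  · exact hv
  · nlinarith [sq_nonneg a, sq_nonneg v]

theorem HasDerivAt.sq_add_sq {u v : ℝ → ℝ} {u' v' t : ℝ} (hu : HasDerivAt u u' t)
    (hv : HasDerivAt v v' t) :
    HasDerivAt (fun s => u s ^ 2 + v s ^ 2) (2 * (u t * u' + v t * v')) t := by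
  refine ((hu.fun_pow 2).add (hv.fun_pow 2)).congr_deriv ?_
  push_cast
  ring

theorem vortex_v_eq_zero_of_sq_add_sq_const {Γ₀ Γ₁ : ℝ} (hΓ₁ : Γ₁ ≠ 0) {u v : ℝ → ℝ}
    (hu : ∀ t, HasDerivAt u (vortexFieldU Γ₀ Γ₁ (u t) (v t)) t)
    (hv : ∀ t, HasDerivAt v (vortexFieldV Γ₀ Γ₁ (u t) (v t)) t)
    (hconst : ∀ s t, u s ^ 2 + v s ^ 2 = u t ^ 2 + v t ^ 2) (t : ℝ) : v t = 0 := by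
  have hderiv := (hu t).sq_add_sq (hv t)
  rw [mul_vortexFieldU_add_mul_vortexFieldV] at hderiv
  have hzero : HasDerivAt (fun s => u s ^ 2 + v s ^ 2) 0 t := by
    simpa only [funext fun s => hconst s t] using hasDerivAt_const t (u t ^ 2 + v t ^ 2)
  have hcoef : Γ₁ / (2 * π) ≠ 0 := div_ne_zero hΓ₁ (by positivity)
  have := hderiv.unique hzero
  simp only [mul_eq_zero, neg_eq_zero, two_ne_zero, hcoef, false_or] at this
  exact eq_zero_of_div_sq_add_sq_eq_zero this

theorem stmt_9_general (Γ₀ Γ₁ : ℝ) (hΓ₁ : Γ₁ ≠ 0) (u v : ℝ → ℝ)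
    (hu : ∀ t : ℝ, HasDerivAt u
      ((Γ₀ / (2 * Real.pi)) * v t
        - (Γ₁ / (2 * Real.pi)) * (v t / ((u t - 1) ^ 2 + v t ^ 2))
        - (Γ₀ / (2 * Real.pi)) * (v t / (u t ^ 2 + v t ^ 2))) t)
    (hv : ∀ t : ℝ, HasDerivAt v
      (-((Γ₀ / (2 * Real.pi)) * u t)
        + (Γ₁ / (2 * Real.pi)) * ((u t - 1) / ((u t - 1) ^ 2 + v t ^ 2))
        + (Γ₀ / (2 * Real.pi)) * (u t / (u t ^ 2 + v t ^ 2))) t) :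
    ((∀ s t : ℝ, u s ^ 2 + v s ^ 2 = u t ^ 2 + v t ^ 2) ∧
     (∀ s t : ℝ, (u s - 1) ^ 2 + v s ^ 2 = (u t - 1) ^ 2 + v t ^ 2))
    ↔ (∀ s t : ℝ, (u s, v s) = (u t, v t)) := by
  constructor
  · rintro ⟨hr₀, -⟩
    have hv₀ := vortex_v_eq_zero_of_sq_add_sq_const hΓ₁ hu hv hr₀
    have hu' (t : ℝ) : HasDerivAt u 0 t := by
      have h : HasDerivAt u (vortexFieldU Γ₀ Γ₁ (u t) (v t)) t := hu t
      rwa [hv₀ t, vortexFieldU_zero_right] at h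
    have hu_const := is_const_of_deriv_eq_zero (fun t => (hu' t).differentiableAt)
      fun t => (hu' t).deriv
    intro s t
    rw [hu_const s t, hv₀ s, hv₀ t]
  · intro h
    have hcoord (s t : ℝ) := Prod.mk.inj (h s t)
    exact ⟨fun s t => by rw [(hcoord s t).1, (hcoord s t).2],
      fun s t => by rw [(hcoord s t).1, (hcoord s t).2]⟩

/-- A global solution has both squared inter-vortex distances `u²+v²` and `(u−1)²+v²`
constant if and only if it is a constant (equilibrium) solution. -/
theorem stmt_9 (Γ₀ Γ₁ : ℝ) (hΓ₀ : Γ₀ ≠ 0) (hΓ₁ : Γ₁ ≠ 0) (u v : ℝ → ℝ)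
    (havoid : ∀ t : ℝ, (u t, v t) ≠ ((0 : ℝ), (0 : ℝ)) ∧ (u t, v t) ≠ ((1 : ℝ), (0 : ℝ)))
    (hu : ∀ t : ℝ, HasDerivAt u
      ((Γ₀ / (2 * Real.pi)) * v t
        - (Γ₁ / (2 * Real.pi)) * (v t / ((u t - 1) ^ 2 + v t ^ 2))
        - (Γ₀ / (2 * Real.pi)) * (v t / (u t ^ 2 + v t ^ 2))) t)
    (hv : ∀ t : ℝ, HasDerivAt v
      (-((Γ₀ / (2 * Real.pi)) * u t)
        + (Γ₁ / (2 * Real.pi)) * ((u t - 1) / ((u t - 1) ^ 2 + v t ^ 2))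
        + (Γ₀ / (2 * Real.pi)) * (u t / (u t ^ 2 + v t ^ 2))) t) :
    ((∀ s t : ℝ, u s ^ 2 + v s ^ 2 = u t ^ 2 + v t ^ 2) ∧
     (∀ s t : ℝ, (u s - 1) ^ 2 + v s ^ 2 = (u t - 1) ^ 2 + v t ^ 2))
    ↔ (∀ s t : ℝ, (u s, v s) = (u t, v t)) :=
  stmt_9_general Γ₀ Γ₁ hΓ₁ u v hu hv
end

section
/- Let Γ0, Γ1 be real numbers with Γ0 ≠ 0 and Γ1 ≠ 0, and let (u,v): ℝ → ℝ² be a global solution of the system (u',v') = F(u,v) avoiding the points (0,0) and (1,0). Suppose there exists δ > 0 such that for all t ∈ ℝ and every point (u*,v*) ∈ ℝ² \ {(0,0),(1,0)} with F(u*,v*) = (0,0), the distance from (u(t),v(t)) to (u*,v*) is at least δ. Then the solution is periodic: there exists T > 0 such that (u(t+T), v(t+T)) = (u(t), v(t)) for all t ∈ ℝ. -/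
/-!
`F` is the Hamiltonian vector field of
`H = ω/2 · r₀² - Γ₁/(4π) · log r₁² - Γ₀/(4π) · log r₀²`, `r₀, r₁` the distances to the two vortices,
so `H` is constant along solutions. Since `|H| → ∞` at both vortices and at infinity, every level
set of `H` lies in a compact set avoiding the vortices; hence the orbit has an ω-limit point `q`,
which by hypothesis is not an equilibrium. Near `q` the orbit crosses the line through `q` normal
to `F(q)` at two times `τ₁ < τ₂`, and `H` is strictly monotone along this line, so both crossing
points coincide. Uniqueness of solutions then makes the solution `(τ₂ - τ₁)`-periodic.
-/

open Set Filter Topology Metric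

section ODE

variable {E : Type*} [NormedAddCommGroup E] [NormedSpace ℝ E] {f : E → E} {x : ℝ → E}

theorem periodic_of_hasDerivAt_of_eq (hx : ∀ t, HasDerivAt x (f (x t)) t)
    (hf : ∀ t, ContDiffAt ℝ 1 f (x t)) {τ₁ τ₂ : ℝ} (hτ : x τ₁ = x τ₂) :
    Function.Periodic x (τ₂ - τ₁) := by
  have hcont : Continuous x := continuous_iff_continuousAt.2 fun t => (hx t).continuousAt
  have hshift : ∀ t, HasDerivAt (fun s => x (s + (τ₂ - τ₁))) (f (x (t + (τ₂ - τ₁)))) t :=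
    fun t => (hx _).comp_add_const t _
  let S : Set ℝ := {t | x (t + (τ₂ - τ₁)) = x t}
  have hclosed : IsClosed S := isClosed_eq (hcont.comp (continuous_add_const _)) hcont
  have hopen : IsOpen S := by
    refine isOpen_iff_mem_nhds.2 fun t₀ (ht₀ : x (t₀ + (τ₂ - τ₁)) = x t₀) => ?_
    obtain ⟨K, s, hs, hlip⟩ := (hf t₀).exists_lipschitzOnWith
    have hs' : s ∈ 𝓝 (x (t₀ + (τ₂ - τ₁))) := ht₀ ▸ hs
    exact ODE_solution_unique_of_eventually (v := fun _ => f) (s := fun _ => s)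
      (.of_forall fun _ => hlip)
      ((((hcont.comp (continuous_add_const _)).continuousAt.eventually_mem hs')).mono
        fun t ht => ⟨hshift t, ht⟩)
      ((hcont.continuousAt.eventually_mem hs).mono fun t ht => ⟨hx t, ht⟩) ht₀
  have huniv : S = univ :=
    IsClopen.eq_univ ⟨hclosed, hopen⟩ ⟨τ₁, by simp [S, hτ]⟩
  exact fun t => (huniv ▸ mem_univ t : t ∈ S)

theorem exists_transversal_crossing (hx : ∀ t, HasDerivAt x (f (x t)) t) {L : NNReal}
    (hL : LipschitzWith L x) (ℓ : E →L[ℝ] ℝ) {q : E} {ε : ℝ} (hε : 0 < ε) {c : ℝ} (hc : 0 < c)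
    (hℓf : ∀ p ∈ ball q ε, c ≤ ℓ (f p)) :
    ∃ Δ > 0, ∃ η > 0, ∀ t₀, dist (x t₀) q < η →
      ∃ τ ∈ Icc (t₀ - Δ) (t₀ + Δ), ℓ (x τ) = ℓ q ∧ x τ ∈ ball q ε := by
  set Δ := ε / 2 / (L + 1)
  have hΔ : 0 < Δ := by positivity
  set η := min (ε / 2) (c * Δ / (‖ℓ‖ + 1))
  have hη : 0 < η := by positivity
  refine ⟨Δ, hΔ, η, hη, fun t₀ ht₀ => ?_⟩
  have hnear : ∀ τ ∈ Icc (t₀ - Δ) (t₀ + Δ), x τ ∈ ball q ε := by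
    intro τ hτ
    have h1 : dist (x τ) (x t₀) ≤ L * Δ :=
      (hL.dist_le_mul τ t₀).trans (mul_le_mul_of_nonneg_left
        (by rw [Real.dist_eq, abs_le]; constructor <;> linarith [hτ.1, hτ.2]) L.2)
    have h2 : (L : ℝ) * Δ < ε / 2 := by
      have : Δ * (L + 1) = ε / 2 := div_mul_cancel₀ _ (by positivity)
      linarith
    have h3 := min_le_left (ε / 2) (c * Δ / (‖ℓ‖ + 1))
    rw [mem_ball]
    linarith [dist_triangle (x τ) (x t₀) q]
  set g : ℝ → ℝ := fun t => ℓ (x t) - ℓ q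
  have hg : ∀ t, HasDerivAt g (ℓ (f (x t))) t := fun t =>
    ((ℓ.hasFDerivAt.comp_hasDerivAt t (hx t))).sub_const _
  have hgrow : ∀ s ∈ Icc (t₀ - Δ) (t₀ + Δ), ∀ t ∈ Icc (t₀ - Δ) (t₀ + Δ), s ≤ t →
      c * (t - s) ≤ g t - g s :=
    (convex_Icc _ _).mul_sub_le_image_sub_of_le_deriv
      (fun t _ => (hg t).continuousAt.continuousWithinAt)
      (fun t _ => (hg t).differentiableAt.differentiableWithinAt)
      (fun t ht => (hg t).deriv ▸ hℓf _ (hnear t (interior_subset ht)))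
  have hg₀ : |g t₀| < c * Δ := calc
    |g t₀| = |ℓ (x t₀ - q)| := by rw [map_sub]
    _ ≤ ‖ℓ‖ * dist (x t₀) q := by rw [dist_eq_norm]; exact ℓ.le_opNorm _
    _ ≤ ‖ℓ‖ * η := by gcongr
    _ < (‖ℓ‖ + 1) * η := by linarith
    _ ≤ c * Δ := by
      rw [← le_div_iff₀' (by positivity)]; exact min_le_right _ _
  have hmem₀ : t₀ ∈ Icc (t₀ - Δ) (t₀ + Δ) := ⟨by linarith, by linarith⟩
  have hlo := hgrow _ ⟨le_rfl, by linarith⟩ t₀ hmem₀ (by linarith)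
  have hhi := hgrow t₀ hmem₀ _ ⟨by linarith, le_rfl⟩ (by linarith)
  obtain ⟨τ, hτ, hgτ⟩ := intermediate_value_Icc (show t₀ - Δ ≤ t₀ + Δ by linarith)
    (fun t _ => (hg t).continuousAt.continuousWithinAt)
    (show (0 : ℝ) ∈ Icc (g (t₀ - Δ)) (g (t₀ + Δ)) by
      constructor <;> linarith [abs_le.1 hg₀.le])
  exact ⟨τ, hτ, sub_eq_zero.1 hgτ, hnear τ hτ⟩

end ODE

theorem Convex.exists_hasFDerivAt_apply_sub_eq_zero {E : Type*} [NormedAddCommGroup E]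
    [NormedSpace ℝ E] {S : Set E} (hS : Convex ℝ S) {H : E → ℝ} {H' : E → E →L[ℝ] ℝ}
    (hH : ∀ p ∈ S, HasFDerivAt H (H' p) p) {p₁ p₂ : E} (h₁ : p₁ ∈ S) (h₂ : p₂ ∈ S)
    (hp : H p₁ = H p₂) : ∃ p ∈ S, H' p (p₂ - p₁) = 0 := by
  have hmem : ∀ s ∈ Icc (0 : ℝ) 1, p₁ + s • (p₂ - p₁) ∈ S := fun s hs =>
    hS.add_smul_sub_mem h₁ h₂ hs
  have hφ : ∀ s ∈ Icc (0 : ℝ) 1, HasDerivAt (fun s : ℝ => H (p₁ + s • (p₂ - p₁)))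
      (H' (p₁ + s • (p₂ - p₁)) (p₂ - p₁)) s := fun s hs =>
    (hH _ (hmem s hs)).comp_hasDerivAt s
      (((hasDerivAt_id s).smul_const _).const_add _ |>.congr_deriv (one_smul _ _))
  obtain ⟨s, hs, h⟩ := exists_hasDerivAt_eq_zero zero_lt_one
    (fun s hs => (hφ s hs).continuousAt.continuousWithinAt) (by simpa using hp)
    (fun s hs => hφ s (Ioo_subset_Icc_self hs))
  exact ⟨_, hmem s (Ioo_subset_Icc_self hs), h⟩

lemma eventually_add_mul_ne {α : Type*} {l : Filter α} {g h : α → ℝ} {C : ℝ}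
    (hg : ∀ᶠ p in l, |g p| ≤ C) (hh : Tendsto h l atTop) {a : ℝ} (ha : a ≠ 0) (c : ℝ) :
    ∀ᶠ p in l, g p + a * h p ≠ c := by
  filter_upwards [hg, hh.eventually_ge_atTop ((C + |c| + 1) / |a|)] with p hgp hhp hp
  have hC : 0 ≤ C := (abs_nonneg _).trans hgp
  have hpos : 0 ≤ h p := (div_nonneg (by positivity) (abs_nonneg a)).trans hhp
  have hbig : C + |c| + 1 ≤ |a * h p| := by
    rw [abs_mul, abs_of_nonneg hpos]
    exact (div_le_iff₀' (abs_pos.2 ha)).1 hhp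
  have hsmall : |a * h p| ≤ |c| + C := by
    rw [show a * h p = c - g p by linarith]
    exact (abs_sub _ _).trans (by linarith)
  linarith

lemma tendsto_neg_log_nhdsNE {X : Type*} [TopologicalSpace X] {φ : X → ℝ} {e : X}
    (hφ : ContinuousAt φ e) (he : φ e = 0) (hpos : ∀ p ≠ e, 0 < φ p) :
    Tendsto (fun p => -Real.log (φ p)) (𝓝[≠] e) atTop := by
  have hφ' : Tendsto φ (𝓝[≠] e) (𝓝[>] 0) :=
    tendsto_nhdsWithin_of_tendsto_nhds_of_eventually_within _
      (he ▸ hφ.tendsto.mono_left nhdsWithin_le_nhds) (eventually_nhdsWithin_of_forall hpos)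
  exact tendsto_neg_atBot_atTop.comp (Real.tendsto_log_nhdsGT_zero.comp hφ')

lemma tendsto_sub_mul_log_atTop (k : ℝ) : Tendsto (fun s => s - k * Real.log s) atTop atTop :=
  ((Asymptotics.IsEquivalent.refl (u := id)).sub_isLittleO
    (Real.isLittleO_log_id_atTop.const_mul_left k)).symm.tendsto_atTop tendsto_id

lemma tendsto_sq_add_sq_cocompact :
    Tendsto (fun p : ℝ × ℝ => p.1 ^ 2 + p.2 ^ 2) (cocompact _) atTop := by
  refine tendsto_atTop_mono (fun p => ?_)
    ((tendsto_pow_atTop two_ne_zero).comp tendsto_norm_cocompact_atTop)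
  rw [Function.comp_apply, Prod.norm_def, Real.norm_eq_abs, Real.norm_eq_abs]
  rcases max_cases |p.1| |p.2| with ⟨h, -⟩ | ⟨h, -⟩ <;> rw [h, sq_abs] <;> nlinarith

lemma sq_add_sq_pos_of_ne {p c : ℝ × ℝ} (h : p ≠ c) : 0 < (p.1 - c.1) ^ 2 + (p.2 - c.2) ^ 2 := by
  by_contra! h'
  exact h (Prod.ext (by nlinarith [sq_nonneg (p.1 - c.1), sq_nonneg (p.2 - c.2)])
    (by nlinarith [sq_nonneg (p.1 - c.1), sq_nonneg (p.2 - c.2)]))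

lemma abs_log_sub_log_le {x y : ℝ} (hx : 0 < x) (hy : 0 < y) (hxy : x ≤ 4 * y) (hyx : y ≤ 4 * x) :
    |Real.log x - Real.log y| ≤ 3 := by
  have h₁ := Real.log_le_sub_one_of_pos (div_pos hx hy)
  have h₂ := Real.log_le_sub_one_of_pos (div_pos hy hx)
  rw [Real.log_div hx.ne' hy.ne'] at h₁
  rw [Real.log_div hy.ne' hx.ne'] at h₂
  rw [abs_le]
  constructor
  · linarith [(div_le_iff₀ hx).2 (by linarith : y ≤ 4 * x)]
  · linarith [(div_le_iff₀ hy).2 hxy]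

lemma sqrt_sub_sq_add_sub_sq_le (p q : ℝ × ℝ) :
    √((p.1 - q.1) ^ 2 + (p.2 - q.2) ^ 2) ≤ 2 * dist p q := by
  have h₁ : |p.1 - q.1| ≤ dist p q := by
    rw [← Real.dist_eq, Prod.dist_eq]; exact le_max_left _ _
  have h₂ : |p.2 - q.2| ≤ dist p q := by
    rw [← Real.dist_eq, Prod.dist_eq]; exact le_max_right _ _
  rw [Real.sqrt_le_iff]
  refine ⟨by positivity, ?_⟩
  nlinarith [sq_abs (p.1 - q.1), sq_abs (p.2 - q.2), abs_nonneg (p.1 - q.1),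
    abs_nonneg (p.2 - q.2)]

namespace Plane

/-- `symplecticForm w = ω(w, ·)` for the standard symplectic form `ω` on `ℝ²`: a vector field `f`
is the Hamiltonian vector field of `H` when `dH_p = symplecticForm (f p)`. -/
def symplecticForm (w : ℝ × ℝ) : ℝ × ℝ →L[ℝ] ℝ :=
  w.1 • ContinuousLinearMap.snd ℝ ℝ ℝ - w.2 • ContinuousLinearMap.fst ℝ ℝ ℝ

@[simp] lemma symplecticForm_apply (w z : ℝ × ℝ) : symplecticForm w z = w.1 * z.2 - w.2 * z.1 := rfl

/-- `⟪w, ·⟫`; `ℝ × ℝ` carries the sup norm, so it has no inner product instance. -/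
def innerCLM (w : ℝ × ℝ) : ℝ × ℝ →L[ℝ] ℝ :=
  w.1 • ContinuousLinearMap.fst ℝ ℝ ℝ + w.2 • ContinuousLinearMap.snd ℝ ℝ ℝ

@[simp] lemma innerCLM_apply (w z : ℝ × ℝ) : innerCLM w z = w.1 * z.1 + w.2 * z.2 := rfl

lemma eq_zero_of_symplecticForm_eq_zero_of_innerCLM_eq_zero {v w z : ℝ × ℝ}
    (hvw : 0 < innerCLM w v) (hv : symplecticForm v z = 0) (hw : innerCLM w z = 0) : z = 0 := by
  simp only [symplecticForm_apply, innerCLM_apply] at hvw hv hw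
  have h₁ : z.1 * (w.1 * v.1 + w.2 * v.2) = 0 := by linear_combination v.1 * hw - w.2 * hv
  have h₂ : z.2 * (w.1 * v.1 + w.2 * v.2) = 0 := by linear_combination v.2 * hw + w.1 * hv
  exact Prod.ext ((mul_eq_zero.1 h₁).resolve_right hvw.ne')
    ((mul_eq_zero.1 h₂).resolve_right hvw.ne')

variable {U : Set (ℝ × ℝ)} {H : ℝ × ℝ → ℝ} {f : ℝ × ℝ → ℝ × ℝ} {x : ℝ → ℝ × ℝ}

theorem hamiltonian_comp_eq (hH : ∀ p ∈ U, HasFDerivAt H (symplecticForm (f p)) p)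
    (hx : ∀ t, HasDerivAt x (f (x t)) t) (hxU : ∀ t, x t ∈ U) (s t : ℝ) :
    H (x s) = H (x t) := by
  have hd : ∀ t, HasDerivAt (H ∘ x) 0 t := fun t => by
    simpa [mul_comm] using (hH _ (hxU t)).comp_hasDerivAt t (hx t)
  exact is_const_of_deriv_eq_zero (fun t => (hd t).differentiableAt) (fun t => (hd t).deriv) s t

theorem exists_periodic_of_isCompact (hU : IsOpen U)
    (hH : ∀ p ∈ U, HasFDerivAt H (symplecticForm (f p)) p) (hf : ∀ p ∈ U, ContDiffAt ℝ 1 f p)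
    (hx : ∀ t, HasDerivAt x (f (x t)) t) {K : Set (ℝ × ℝ)} (hK : IsCompact K) (hKU : K ⊆ U)
    (hxK : ∀ t, x t ∈ K) (hω : ∀ q ∈ K, MapClusterPt q atTop x → f q ≠ 0) :
    ∃ T > 0, Function.Periodic x T := by
  have hxU : ∀ t, x t ∈ U := fun t => hKU (hxK t)
  obtain ⟨C, hC⟩ := hK.exists_bound_of_continuousOn fun p hp =>
    (hf p (hKU hp)).continuousAt.continuousWithinAt
  have hL : LipschitzWith C.toNNReal x :=
    lipschitzWith_of_nnnorm_deriv_le (fun t => (hx t).differentiableAt) fun t => by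
      rw [(hx t).deriv, ← NNReal.coe_le_coe, coe_nnnorm]
      exact (hC _ (hxK t)).trans (Real.le_coe_toNNReal C)
  obtain ⟨q, hqK, hq⟩ := hK.exists_mapClusterPt (f := atTop) (tendsto_principal.2 (.of_forall hxK))
  set w := f q
  have hw : 0 < innerCLM w w := by
    have hw0 : w ≠ 0 := hω q hqK hq
    by_contra! h
    simp only [innerCLM_apply] at h
    exact hw0 (Prod.ext (by rw [Prod.fst_zero]; nlinarith) (by rw [Prod.snd_zero]; nlinarith))
  obtain ⟨ε, hε, hball⟩ := Metric.eventually_nhds_iff_ball.1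
    ((((innerCLM w).continuous.continuousAt.comp (hf q (hKU hqK)).continuousAt).eventually_const_lt
      (half_lt_self hw)).and (hU.mem_nhds (hKU hqK)))
  obtain ⟨Δ, hΔ, η, hη, hcross⟩ := exists_transversal_crossing hx hL (innerCLM w) hε
    (half_pos hw) fun p hp => (hball p hp).1.le
  have hfreq := frequently_atTop.1 (hq.frequently (ball_mem_nhds q hη))
  obtain ⟨t₁, -, ht₁⟩ := hfreq 0
  obtain ⟨t₂, ht₁₂, ht₂⟩ := hfreq (t₁ + 2 * Δ + 1)
  obtain ⟨τ₁, hτ₁, hℓ₁, hball₁⟩ := hcross t₁ ht₁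
  obtain ⟨τ₂, hτ₂, hℓ₂, hball₂⟩ := hcross t₂ ht₂
  have hH₁₂ : H (x τ₁) = H (x τ₂) := hamiltonian_comp_eq hH hx hxU τ₁ τ₂
  obtain ⟨p, hp, hωp⟩ := (convex_ball q ε).exists_hasFDerivAt_apply_sub_eq_zero
    (fun p hp => hH p (hball p hp).2) hball₁ hball₂ hH₁₂
  -- `x τ₂ - x τ₁` is orthogonal to `w` and `ω`-orthogonal to `f p`, where `⟪w, f p⟫ > 0`
  have hsame : x τ₂ - x τ₁ = 0 :=
    eq_zero_of_symplecticForm_eq_zero_of_innerCLM_eq_zero ((half_pos hw).trans (hball p hp).1)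
      hωp (by rw [map_sub, hℓ₁, hℓ₂, sub_self])
  exact ⟨τ₂ - τ₁, by linarith [hτ₁.2, hτ₂.1],
    periodic_of_hasDerivAt_of_eq hx (fun t => hf _ (hxU t)) (sub_eq_zero.1 hsame).symm⟩

end Plane

namespace VortexPair

noncomputable def field (a b : ℝ) (p : ℝ × ℝ) : ℝ × ℝ :=
  (a * p.2 - b * (p.2 / ((p.1 - 1) ^ 2 + p.2 ^ 2)) - a * (p.2 / (p.1 ^ 2 + p.2 ^ 2)),
   -(a * p.1) + b * ((p.1 - 1) / ((p.1 - 1) ^ 2 + p.2 ^ 2)) + a * (p.1 / (p.1 ^ 2 + p.2 ^ 2)))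

noncomputable def hamiltonian (a b : ℝ) (p : ℝ × ℝ) : ℝ :=
  a / 2 * (p.1 ^ 2 + p.2 ^ 2) - b / 2 * Real.log ((p.1 - 1) ^ 2 + p.2 ^ 2)
    - a / 2 * Real.log (p.1 ^ 2 + p.2 ^ 2)

variable {a b : ℝ}

lemma eventually_hamiltonian_ne_nhdsNE_zero (ha : a ≠ 0) (c : ℝ) :
    ∀ᶠ p in 𝓝[≠] (0, 0), hamiltonian a b p ≠ c := by
  have hg : ContinuousAt (fun p : ℝ × ℝ =>
      a / 2 * (p.1 ^ 2 + p.2 ^ 2) - b / 2 * Real.log ((p.1 - 1) ^ 2 + p.2 ^ 2)) (0, 0) := by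
    fun_prop (disch := norm_num)
  have hlog := tendsto_neg_log_nhdsNE (φ := fun p : ℝ × ℝ => p.1 ^ 2 + p.2 ^ 2) (e := (0, 0))
    (by fun_prop) (by simp) fun p hp => by simpa using sq_add_sq_pos_of_ne hp
  filter_upwards [eventually_add_mul_ne (eventually_nhdsWithin_of_eventually_nhds
    ((hg.abs.tendsto.eventually_lt_const (lt_add_one _)).mono fun _ => le_of_lt)) hlog
    (div_ne_zero ha two_ne_zero) c] with p hp
  convert hp using 1
  unfold hamiltonian
  ring

lemma eventually_hamiltonian_ne_nhdsNE_one (hb : b ≠ 0) (c : ℝ) :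
    ∀ᶠ p in 𝓝[≠] (1, 0), hamiltonian a b p ≠ c := by
  have hg : ContinuousAt (fun p : ℝ × ℝ =>
      a / 2 * (p.1 ^ 2 + p.2 ^ 2) - a / 2 * Real.log (p.1 ^ 2 + p.2 ^ 2)) (1, 0) := by
    fun_prop (disch := norm_num)
  have hlog := tendsto_neg_log_nhdsNE (φ := fun p : ℝ × ℝ => (p.1 - 1) ^ 2 + p.2 ^ 2) (e := (1, 0))
    (by fun_prop) (by simp) fun p hp => by simpa using sq_add_sq_pos_of_ne hp
  filter_upwards [eventually_add_mul_ne (eventually_nhdsWithin_of_eventually_nhds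
    ((hg.abs.tendsto.eventually_lt_const (lt_add_one _)).mono fun _ => le_of_lt)) hlog
    (div_ne_zero hb two_ne_zero) c] with p hp
  convert hp using 1
  unfold hamiltonian
  ring

lemma eventually_hamiltonian_ne_cocompact (ha : a ≠ 0) (c : ℝ) :
    ∀ᶠ p in cocompact (ℝ × ℝ), hamiltonian a b p ≠ c := by
  -- `H = (a/2) (q₀ - (1 + b/a) log q₀) - (b/2) (log q₁ - log q₀)` with `qᵢ` the squared distances
  -- to the two vortices; the last term stays bounded far out.
  have hbdd : ∀ᶠ p in cocompact (ℝ × ℝ),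
      |-(b / 2) * (Real.log ((p.1 - 1) ^ 2 + p.2 ^ 2) - Real.log (p.1 ^ 2 + p.2 ^ 2))|
        ≤ |b / 2| * 3 := by
    filter_upwards [tendsto_sq_add_sq_cocompact.eventually_ge_atTop 4] with p hp
    rw [abs_mul, abs_neg]
    gcongr
    exact abs_log_sub_log_le (by nlinarith) (by linarith) (by nlinarith) (by nlinarith)
  filter_upwards [eventually_add_mul_ne hbdd ((tendsto_sub_mul_log_atTop (1 + b / a)).comp
    tendsto_sq_add_sq_cocompact) (div_ne_zero ha two_ne_zero) c] with p hp
  convert hp using 1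
  simp only [hamiltonian, Function.comp_apply]
  field_simp
  ring

theorem exists_isCompact_hamiltonian_eq (ha : a ≠ 0) (hb : b ≠ 0) (c : ℝ) :
    ∃ K : Set (ℝ × ℝ), IsCompact K ∧ K ⊆ {(0, 0), (1, 0)}ᶜ ∧
      ∀ p ∉ ({(0, 0), (1, 0)} : Set (ℝ × ℝ)), hamiltonian a b p = c → p ∈ K := by
  obtain ⟨r₀, hr₀, h₀⟩ := Metric.eventually_nhds_iff_ball.1
    (eventually_nhdsWithin_iff.1 (eventually_hamiltonian_ne_nhdsNE_zero (b := b) ha c))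
  obtain ⟨r₁, hr₁, h₁⟩ := Metric.eventually_nhds_iff_ball.1
    (eventually_nhdsWithin_iff.1 (eventually_hamiltonian_ne_nhdsNE_one (a := a) hb c))
  obtain ⟨C, hC, hCc⟩ := mem_cocompact.1 (eventually_hamiltonian_ne_cocompact (b := b) ha c)
  refine ⟨C \ (ball (0, 0) r₀ ∪ ball (1, 0) r₁), hC.diff (isOpen_ball.union isOpen_ball), ?_, ?_⟩
  · rintro p ⟨-, hp⟩ (rfl | rfl)
    exacts [hp (.inl (mem_ball_self hr₀)), hp (.inr (mem_ball_self hr₁))]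
  · intro p hp hc
    simp only [mem_insert_iff, mem_singleton_iff, not_or] at hp
    refine ⟨by_contra fun h => hCc h hc, ?_⟩
    rintro (h | h)
    exacts [h₀ p h hp.1 hc, h₁ p h hp.2 hc]

lemma sq_add_sq_pos_of_notMem {p : ℝ × ℝ} (hp : p ∉ ({(0, 0), (1, 0)} : Set (ℝ × ℝ))) :
    0 < p.1 ^ 2 + p.2 ^ 2 ∧ 0 < (p.1 - 1) ^ 2 + p.2 ^ 2 := by
  simp only [mem_insert_iff, mem_singleton_iff, not_or] at hp
  exact ⟨by simpa using sq_add_sq_pos_of_ne hp.1, by simpa using sq_add_sq_pos_of_ne hp.2⟩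

theorem hasFDerivAt_hamiltonian {p : ℝ × ℝ} (hp : p ∉ ({(0, 0), (1, 0)} : Set (ℝ × ℝ))) :
    HasFDerivAt (hamiltonian a b) (Plane.symplecticForm (field a b p)) p := by
  obtain ⟨hq₀, hq₁⟩ := sq_add_sq_pos_of_notMem hp
  have d₀ := (hasFDerivAt_fst (p := p) (𝕜 := ℝ)).pow 2 |>.add ((hasFDerivAt_snd (p := p)).pow 2)
  have d₁ := ((hasFDerivAt_fst (p := p) (𝕜 := ℝ)).sub_const 1).pow 2 |>.add
    ((hasFDerivAt_snd (p := p)).pow 2)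
  refine (((d₀.const_mul (a / 2)).sub ((d₁.log hq₁.ne').const_mul (b / 2))).sub
    ((d₀.log hq₀.ne').const_mul (a / 2))).congr_fderiv (ContinuousLinearMap.ext fun z => ?_)
  simp only [sub_apply, smul_apply, add_apply, ContinuousLinearMap.coe_fst',
    ContinuousLinearMap.coe_snd', smul_eq_mul, nsmul_eq_mul, Plane.symplecticForm_apply, field,
    Pi.add_apply]
  field_simp
  ring

theorem contDiffAt_field {p : ℝ × ℝ} (hp : p ∉ ({(0, 0), (1, 0)} : Set (ℝ × ℝ))) :
    ContDiffAt ℝ 1 (field a b) p := by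
  have hq₀ := (sq_add_sq_pos_of_notMem hp).1.ne'
  have hq₁ := (sq_add_sq_pos_of_notMem hp).2.ne'
  unfold field
  fun_prop (disch := assumption)

end VortexPair

/-- A global solution that stays a positive distance away from every equilibrium
point of the system is periodic. -/
theorem stmt_10 (Γ₀ Γ₁ : ℝ) (hΓ₀ : Γ₀ ≠ 0) (hΓ₁ : Γ₁ ≠ 0) (u v : ℝ → ℝ)
    (havoid : ∀ t : ℝ, (u t, v t) ≠ ((0 : ℝ), (0 : ℝ)) ∧ (u t, v t) ≠ ((1 : ℝ), (0 : ℝ)))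
    (hu : ∀ t : ℝ, HasDerivAt u
      ((Γ₀ / (2 * Real.pi)) * v t
        - (Γ₁ / (2 * Real.pi)) * (v t / ((u t - 1) ^ 2 + v t ^ 2))
        - (Γ₀ / (2 * Real.pi)) * (v t / (u t ^ 2 + v t ^ 2))) t)
    (hv : ∀ t : ℝ, HasDerivAt v
      (-((Γ₀ / (2 * Real.pi)) * u t)
        + (Γ₁ / (2 * Real.pi)) * ((u t - 1) / ((u t - 1) ^ 2 + v t ^ 2))
        + (Γ₀ / (2 * Real.pi)) * (u t / (u t ^ 2 + v t ^ 2))) t)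
    (hδ : ∃ δ > 0, ∀ t : ℝ, ∀ u' v' : ℝ,
      (u', v') ≠ ((0 : ℝ), (0 : ℝ)) → (u', v') ≠ ((1 : ℝ), (0 : ℝ)) →
      ((Γ₀ / (2 * Real.pi)) * v'
          - (Γ₁ / (2 * Real.pi)) * (v' / ((u' - 1) ^ 2 + v' ^ 2))
          - (Γ₀ / (2 * Real.pi)) * (v' / (u' ^ 2 + v' ^ 2)) = 0 ∧
        -((Γ₀ / (2 * Real.pi)) * u')
          + (Γ₁ / (2 * Real.pi)) * ((u' - 1) / ((u' - 1) ^ 2 + v' ^ 2))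
          + (Γ₀ / (2 * Real.pi)) * (u' / (u' ^ 2 + v' ^ 2)) = 0) →
      δ ≤ Real.sqrt ((u t - u') ^ 2 + (v t - v') ^ 2)) :
    ∃ T > 0, ∀ t : ℝ, u (t + T) = u t ∧ v (t + T) = v t := by
  obtain ⟨δ, hδ, hfar⟩ := hδ
  set a := Γ₀ / (2 * Real.pi)
  set b := Γ₁ / (2 * Real.pi)
  have ha : a ≠ 0 := div_ne_zero hΓ₀ (by positivity)
  have hb : b ≠ 0 := div_ne_zero hΓ₁ (by positivity)
  set x : ℝ → ℝ × ℝ := fun t => (u t, v t)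
  have hx : ∀ t, HasDerivAt x (VortexPair.field a b (x t)) t := fun t => (hu t).prodMk (hv t)
  have hxU : ∀ t, x t ∉ ({(0, 0), (1, 0)} : Set (ℝ × ℝ)) := by
    simpa only [mem_insert_iff, mem_singleton_iff, not_or] using havoid
  obtain ⟨K, hK, hKU, hlevel⟩ :=
    VortexPair.exists_isCompact_hamiltonian_eq ha hb (VortexPair.hamiltonian a b (x 0))
  have hxK : ∀ t, x t ∈ K := fun t => hlevel _ (hxU t)
    (Plane.hamiltonian_comp_eq (fun _ => VortexPair.hasFDerivAt_hamiltonian) hx hxU t 0)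
  have hω : ∀ q ∈ K, MapClusterPt q atTop x → VortexPair.field a b q ≠ 0 := by
    intro q hqK hq hfq
    have hqU : q ∉ ({(0, 0), (1, 0)} : Set (ℝ × ℝ)) := hKU hqK
    simp only [mem_insert_iff, mem_singleton_iff, not_or] at hqU
    obtain ⟨t, -, ht⟩ :=
      frequently_atTop.1 (hq.frequently (ball_mem_nhds q (half_pos hδ))) 0
    have := hfar t q.1 q.2 hqU.1 hqU.2 ⟨congrArg Prod.fst hfq, congrArg Prod.snd hfq⟩
    linarith [sqrt_sub_sq_add_sub_sq_le (x t) q, mem_ball.1 ht]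
  obtain ⟨T, hT, hper⟩ := Plane.exists_periodic_of_isCompact (toFinite _).isClosed.isOpen_compl
    (fun _ => VortexPair.hasFDerivAt_hamiltonian) (fun _ => VortexPair.contDiffAt_field) hx hK
    hKU hxK hω
  exact ⟨T, hT, fun t => Prod.ext_iff.1 (hper t)⟩
end

section
/- Let I ⊆ ℝ be an open interval and let u: I → ℝ be a differentiable function such that for every α ∈ I, u(α) ∉ {0, 1} and u(α)³ − u(α)² − (α+1)·u(α) + 1 = 0. Define g(α) = f(u(α), α) where f(u,α) = log(u²) − u² + α·log((u−1)²). Then for every α ∈ I, the derivative g'(α) equals log((u(α)−1)²). -/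
/-! The Hamiltonian `f(u, α) = log u² − u² + α log (u − 1)²` has
`∂f/∂u = 2/u − 2u + 2α/(u − 1) = −2 p(u) / (u (u − 1))`, which vanishes on the equilibrium
curve `p(u(α)) = 0`. By the chain rule only the explicit dependence on `α` survives:
`g'(α) = ∂f/∂α = log (u(α) − 1)²`. -/

open Real

lemma hamiltonian_partial_u_eq {u α : ℝ} (h0 : u ≠ 0) (h1 : u ≠ 1) :
    2 / u - 2 * u + 2 * α / (u - 1) =
      -2 * (u ^ 3 - u ^ 2 - (α + 1) * u + 1) / (u * (u - 1)) := by
  have h1' : u - 1 ≠ 0 := sub_ne_zero.mpr h1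
  field_simp
  ring

lemma HasDerivAt.log_sq {f : ℝ → ℝ} {f' x : ℝ} (hf : HasDerivAt f f' x) (hx : f x ≠ 0) :
    HasDerivAt (fun y => Real.log (f y ^ 2)) (2 / f x * f') x := by
  convert (hf.fun_pow 2).log (pow_ne_zero 2 hx) using 1
  field_simp
  ring

lemma hasDerivAt_hamiltonian_comp {u : ℝ → ℝ} {u' α : ℝ} (hu : HasDerivAt u u' α)
    (h0 : u α ≠ 0) (h1 : u α ≠ 1) :
    HasDerivAt (fun β => log (u β ^ 2) - u β ^ 2 + β * log ((u β - 1) ^ 2))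
      ((2 / u α - 2 * u α + 2 * α / (u α - 1)) * u' + log ((u α - 1) ^ 2)) α := by
  have hlog := HasDerivAt.log_sq (hu.sub_const 1) (sub_ne_zero.mpr h1)
  refine (((hu.log_sq h0).fun_sub (hu.fun_pow 2)).fun_add
    ((hasDerivAt_id' α).fun_mul hlog)).congr_deriv ?_
  ring

/-- If `u(α)` is a differentiable branch of roots of `p(u) = u³ − u² − (α+1)u + 1`
avoiding `0` and `1` on an open interval, then `g(α) = f(u(α), α)`, where
`f(u,α) = log(u²) − u² + α·log((u−1)²)`, satisfies `g'(α) = log((u(α)−1)²)`. -/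
theorem stmt_11 (a b : ℝ) (u : ℝ → ℝ)
    (hdiff : ∀ α ∈ Set.Ioo a b, DifferentiableAt ℝ u α)
    (hne : ∀ α ∈ Set.Ioo a b, u α ≠ 0 ∧ u α ≠ 1)
    (hroot : ∀ α ∈ Set.Ioo a b, (u α) ^ 3 - (u α) ^ 2 - (α + 1) * u α + 1 = 0) :
    ∀ α ∈ Set.Ioo a b,
      HasDerivAt (fun β : ℝ => Real.log ((u β) ^ 2) - (u β) ^ 2
          + β * Real.log ((u β - 1) ^ 2))
        (Real.log ((u α - 1) ^ 2)) α := by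
  intro α hα
  obtain ⟨h0, h1⟩ := hne α hα
  have hpartial : 2 / u α - 2 * u α + 2 * α / (u α - 1) = 0 := by
    rw [hamiltonian_partial_u_eq h0 h1, hroot α hα, mul_zero, zero_div]
  simpa [hpartial] using hasDerivAt_hamiltonian_comp (hdiff α hα).hasDerivAt h0 h1
end

section
/- Let I ⊆ (0,∞) be an open interval and let u: I → ℝ be a differentiable function such that for every α ∈ I, u(α) < 0 and u(α)³ − u(α)² − (α+1)·u(α) + 1 = 0. Then the function g(α) = f(u(α), α), where f(u,α) = log(u²) − u² + α·log((u−1)²), is strictly monotonically increasing on I. -/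
/-!
Envelope argument: along a branch of roots `u(α)` of `p`, the chain rule gives
`g'(α) = ∂ᵤf · u'(α) + ∂_α f`, and `∂ᵤf = -2 p(u) / (u (u - 1))` vanishes there. Hence
`g'(α) = log ((u - 1)²)`, which is positive because `u < 0`.
-/

open Real Set

noncomputable def vortexHamiltonian (u α : ℝ) : ℝ :=
  log (u ^ 2) - u ^ 2 + α * log ((u - 1) ^ 2)

theorem hasDerivAt_vortexHamiltonian_comp {u : ℝ → ℝ} {u' α : ℝ} (hu : HasDerivAt u u' α)
    (h0 : u α ≠ 0) (h1 : u α - 1 ≠ 0) :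
    HasDerivAt (fun β => vortexHamiltonian (u β) β)
      (-2 * (u α ^ 3 - u α ^ 2 - (α + 1) * u α + 1) / (u α * (u α - 1)) * u'
        + log ((u α - 1) ^ 2)) α := by
  have hlog : HasDerivAt (fun β => log (u β ^ 2)) (2 * u α * u' / u α ^ 2) α := by
    simpa using (hu.fun_pow 2).log (pow_ne_zero 2 h0)
  have hlog' : HasDerivAt (fun β => log ((u β - 1) ^ 2))
      (2 * (u α - 1) * u' / (u α - 1) ^ 2) α := by
    simpa using ((hu.sub_const 1).fun_pow 2).log (pow_ne_zero 2 h1)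
  have hsq : HasDerivAt (fun β => u β ^ 2) (2 * u α * u') α := by
    simpa using hu.fun_pow 2
  refine ((hlog.fun_sub hsq).fun_add ((hasDerivAt_id α).mul hlog')).congr_deriv ?_
  simp only [id, one_mul]
  field_simp
  ring

theorem log_sq_sub_one_pos {x : ℝ} (hx : x < 0) : 0 < log ((x - 1) ^ 2) :=
  log_pos (by nlinarith)

theorem stmt_12_general (a b : ℝ) (u : ℝ → ℝ)
    (hdiff : ∀ α ∈ Set.Ioo a b, DifferentiableAt ℝ u α)
    (hneg : ∀ α ∈ Set.Ioo a b, u α < 0)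
    (hroot : ∀ α ∈ Set.Ioo a b, (u α) ^ 3 - (u α) ^ 2 - (α + 1) * u α + 1 = 0) :
    StrictMonoOn (fun α : ℝ => Real.log ((u α) ^ 2) - (u α) ^ 2
      + α * Real.log ((u α - 1) ^ 2)) (Set.Ioo a b) := by
  have hderiv : ∀ α ∈ Ioo a b,
      HasDerivAt (fun β => vortexHamiltonian (u β) β) (log ((u α - 1) ^ 2)) α := by
    intro α hα
    have hu := hneg α hα
    simpa [hroot α hα] using
      hasDerivAt_vortexHamiltonian_comp (hdiff α hα).hasDerivAt hu.ne (by linarith)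
  refine strictMonoOn_of_hasDerivWithinAt_pos (f' := fun α => log ((u α - 1) ^ 2))
    (convex_Ioo a b) (fun α hα => (hderiv α hα).continuousAt.continuousWithinAt)
    (fun α hα => ?_) (fun α hα => ?_) <;> simp only [interior_Ioo] at hα ⊢
  · exact (hderiv α hα).hasDerivWithinAt
  · exact log_sq_sub_one_pos (hneg α hα)

/-- For a differentiable branch `u(α) < 0` of roots of `p(u) = u³ − u² − (α+1)u + 1`
on an open interval `I ⊆ (0,∞)`, the function `g(α) = f(u(α), α)` with
`f(u,α) = log(u²) − u² + α·log((u−1)²)` is strictly increasing. -/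
theorem stmt_12 (a b : ℝ) (ha : 0 ≤ a) (u : ℝ → ℝ)
    (hdiff : ∀ α ∈ Set.Ioo a b, DifferentiableAt ℝ u α)
    (hneg : ∀ α ∈ Set.Ioo a b, u α < 0)
    (hroot : ∀ α ∈ Set.Ioo a b, (u α) ^ 3 - (u α) ^ 2 - (α + 1) * u α + 1 = 0) :
    StrictMonoOn (fun α : ℝ => Real.log ((u α) ^ 2) - (u α) ^ 2
      + α * Real.log ((u α - 1) ^ 2)) (Set.Ioo a b) :=
  stmt_12_general a b u hdiff hneg hroot
end

section
/- Let I ⊆ (0,∞) be an open interval and let u: I → ℝ be a differentiable function such that for every α ∈ I, u(α) > 1 and u(α)³ − u(α)² − (α+1)·u(α) + 1 = 0. Then the function g(α) = f(u(α), α), where f(u,α) = log(u²) − u² + α·log((u−1)²), is strictly monotonically decreasing on I ∩ (0, 3/2) and strictly monotonically increasing on I ∩ (3/2, ∞). -/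
/-!
Along a branch of roots `u(α)` of `p(u) = u³ − u² − (α+1)u + 1`, the envelope principle
kills the `u'(α)` term in the derivative of `g(α) = f(u(α), α)`: indeed
`∂f/∂u = 2/u − 2u + 2α/(u−1) = −2 p(u) / (u(u−1))`, which vanishes on the branch. Hence
`g'(α) = ∂f/∂α = log((u−1)²)`, which is negative for `1 < u < 2` and positive for `u > 2`,
and comparing `p` with `(u − 2)(u² + u − 1/2) = u³ − u² − (5/2)u + 1` shows that `u < 2`
exactly when `α < 3/2`.
-/

open Real Set

noncomputable def collinearEnergy (u α : ℝ) : ℝ :=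
  log (u ^ 2) - u ^ 2 + α * log ((u - 1) ^ 2)

lemma collinearEnergy_partial_u {u : ℝ} (α : ℝ) (hu₀ : u ≠ 0) (hu₁ : u ≠ 1) :
    2 / u - 2 * u + 2 * α / (u - 1) =
      -2 * (u ^ 3 - u ^ 2 - (α + 1) * u + 1) / (u * (u - 1)) := by
  have : u - 1 ≠ 0 := sub_ne_zero.mpr hu₁
  field_simp
  ring

lemma hasDerivAt_collinearEnergy {v : ℝ → ℝ} {v' α : ℝ} (hv : HasDerivAt v v' α)
    (hv₀ : v α ≠ 0) (hv₁ : v α ≠ 1) :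
    HasDerivAt (fun x => collinearEnergy (v x) x)
      (v' * (2 / v α - 2 * v α + 2 * α / (v α - 1)) + log ((v α - 1) ^ 2)) α := by
  have hv₁' : v α - 1 ≠ 0 := sub_ne_zero.mpr hv₁
  have h := ((hv.fun_pow 2).log (pow_ne_zero 2 hv₀) |>.sub (hv.fun_pow 2)).add
    ((hasDerivAt_id' α).mul (((hv.sub_const 1).fun_pow 2).log (pow_ne_zero 2 hv₁')))
  refine h.congr_deriv ?_
  norm_num
  field_simp
  ring

lemma hasDerivAt_collinearEnergy_of_root {v : ℝ → ℝ} {α : ℝ}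
    (hv : DifferentiableAt ℝ v α) (hv₁ : 1 < v α)
    (hroot : v α ^ 3 - v α ^ 2 - (α + 1) * v α + 1 = 0) :
    HasDerivAt (fun x => collinearEnergy (v x) x) (log ((v α - 1) ^ 2)) α := by
  have h := hasDerivAt_collinearEnergy hv.hasDerivAt (by positivity) hv₁.ne'
  rwa [collinearEnergy_partial_u α (by positivity) hv₁.ne', hroot, mul_zero, zero_div,
    mul_zero, zero_add] at h

lemma lt_two_of_root {u α : ℝ} (hu : 0 < u) (hα : α < 3 / 2)
    (hroot : u ^ 3 - u ^ 2 - (α + 1) * u + 1 = 0) : u < 2 := by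
  by_contra! h
  have : 0 ≤ (u - 2) * (u ^ 2 + u - 1 / 2) := mul_nonneg (by linarith) (by nlinarith)
  nlinarith

lemma two_lt_of_root {u α : ℝ} (hu : 1 < u) (hα : 3 / 2 < α)
    (hroot : u ^ 3 - u ^ 2 - (α + 1) * u + 1 = 0) : 2 < u := by
  by_contra! h
  have : (u - 2) * (u ^ 2 + u - 1 / 2) ≤ 0 :=
    mul_nonpos_of_nonpos_of_nonneg (by linarith) (by nlinarith)
  nlinarith

section Monotone

variable {D : Set ℝ} {f f' : ℝ → ℝ}

lemma strictAntiOn_of_hasDerivAt_neg (hD : Convex ℝ D) (hDo : IsOpen D)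
    (hf : ∀ x ∈ D, HasDerivAt f (f' x) x) (hf' : ∀ x ∈ D, f' x < 0) : StrictAntiOn f D := by
  refine strictAntiOn_of_hasDerivWithinAt_neg (f' := f') hD
    (fun x hx => (hf x hx).continuousAt.continuousWithinAt) ?_ ?_ <;> rw [hDo.interior_eq]
  exacts [fun x hx => (hf x hx).hasDerivWithinAt, hf']

lemma strictMonoOn_of_hasDerivAt_pos (hD : Convex ℝ D) (hDo : IsOpen D)
    (hf : ∀ x ∈ D, HasDerivAt f (f' x) x) (hf' : ∀ x ∈ D, 0 < f' x) : StrictMonoOn f D := by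
  refine strictMonoOn_of_hasDerivWithinAt_pos (f' := f') hD
    (fun x hx => (hf x hx).continuousAt.continuousWithinAt) ?_ ?_ <;> rw [hDo.interior_eq]
  exacts [fun x hx => (hf x hx).hasDerivWithinAt, hf']

end Monotone

theorem stmt_15_general (a b : ℝ) (u : ℝ → ℝ)
    (hdiff : ∀ α ∈ Set.Ioo a b, DifferentiableAt ℝ u α)
    (hgt : ∀ α ∈ Set.Ioo a b, 1 < u α)
    (hroot : ∀ α ∈ Set.Ioo a b, (u α) ^ 3 - (u α) ^ 2 - (α + 1) * u α + 1 = 0) :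
    StrictAntiOn (fun α : ℝ => Real.log ((u α) ^ 2) - (u α) ^ 2
      + α * Real.log ((u α - 1) ^ 2)) (Set.Ioo a b ∩ Set.Ioo 0 (3 / 2)) ∧
    StrictMonoOn (fun α : ℝ => Real.log ((u α) ^ 2) - (u α) ^ 2
      + α * Real.log ((u α - 1) ^ 2)) (Set.Ioo a b ∩ Set.Ioi (3 / 2)) := by
  have hderiv (α : ℝ) (hα : α ∈ Ioo a b) :
      HasDerivAt (fun x => collinearEnergy (u x) x) (log ((u α - 1) ^ 2)) α :=
    hasDerivAt_collinearEnergy_of_root (hdiff α hα) (hgt α hα) (hroot α hα)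
  constructor
  · refine strictAntiOn_of_hasDerivAt_neg ((convex_Ioo a b).inter (convex_Ioo 0 _))
      (isOpen_Ioo.inter isOpen_Ioo) (fun α hα => hderiv α hα.1) fun α ⟨hα, _, hα₁⟩ => ?_
    have h₁ := hgt α hα
    have h₂ := lt_two_of_root (by linarith) hα₁ (hroot α hα)
    exact log_neg (by positivity) (by nlinarith)
  · refine strictMonoOn_of_hasDerivAt_pos ((convex_Ioo a b).inter (convex_Ioi _))
      (isOpen_Ioo.inter isOpen_Ioi) (fun α hα => hderiv α hα.1) fun α ⟨hα, hα₁⟩ => ?_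
    have h₂ := two_lt_of_root (hgt α hα) hα₁ (hroot α hα)
    exact log_pos (by nlinarith)

/-- For a differentiable branch `u(α) > 1` of roots of `p(u) = u³ − u² − (α+1)u + 1` on an
open interval `I ⊆ (0,∞)`, the function `g(α) = f(u(α), α)` with
`f(u,α) = log(u²) − u² + α·log((u−1)²)` is strictly decreasing on `I ∩ (0, 3/2)` and
strictly increasing on `I ∩ (3/2, ∞)`. -/
theorem stmt_15 (a b : ℝ) (ha : 0 ≤ a) (u : ℝ → ℝ)
    (hdiff : ∀ α ∈ Set.Ioo a b, DifferentiableAt ℝ u α)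
    (hgt : ∀ α ∈ Set.Ioo a b, 1 < u α)
    (hroot : ∀ α ∈ Set.Ioo a b, (u α) ^ 3 - (u α) ^ 2 - (α + 1) * u α + 1 = 0) :
    StrictAntiOn (fun α : ℝ => Real.log ((u α) ^ 2) - (u α) ^ 2
      + α * Real.log ((u α - 1) ^ 2)) (Set.Ioo a b ∩ Set.Ioo 0 (3 / 2)) ∧
    StrictMonoOn (fun α : ℝ => Real.log ((u α) ^ 2) - (u α) ^ 2
      + α * Real.log ((u α - 1) ^ 2)) (Set.Ioo a b ∩ Set.Ioi (3 / 2)) :=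
  stmt_15_general a b u hdiff hgt hroot
end
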